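/- arXiv:1509.02183 — 5 statements merged into one kernel-verified Lean document; each statement's English description precedes it below -/
import Mathlib

section
/- Fix (φ,θ₀) ∈ G. Let β₁ and β₂ be two primitives of ω on D² satisfying the boundary normalization, and let f₁, f₂ be the corresponding action functions, i.e. smooth functions on D² with D(f_i)_p(v) = (β_i)_{φ(p)}(Dφ_p(v)) − (β_i)_p(v) for all p, v and f_i = θ₀ on ∂D². Then for every periodic orbit of φ, namely every x ∈ D² and d ≥ 1 with φ^d(x) = x and x, φ(x), …, φ^{d−1}(x) pairwise distinct, the total actions agree: Σ_{i=0}^{d−1} f₁(φ^i(x)) = Σ_{i=0}^{d−1} f₂(φ^i(x)). -/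
open Real MeasureTheory Metric Set Filter

noncomputable section

/-- The closed unit disk in `ℝ² ≅ ℂ`. -/
def D2 : Set ℂ := Metric.closedBall 0 1

/-- Rotation of the plane by angle `2πθ`. -/
def rotate (θ : ℝ) (p : ℂ) : ℂ := Complex.exp (2 * Real.pi * θ * Complex.I) * p

/-- The standard primitive `β` of the area form `ω`: `β_p(v) = (p₁v₂ − p₂v₁)/(2π)`. -/
def beta (p v : ℂ) : ℝ := (p.re * v.im - p.im * v.re) / (2 * Real.pi)

/-- `(φ, θ₀) ∈ G`: `φ` is a smooth area-preserving diffeomorphism of the closed unit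
disk which agrees with rotation by `2πθ₀` near the boundary. -/
structure MemG (φ : ℂ → ℂ) (θ₀ : ℝ) : Prop where
  smooth : ContDiffOn ℝ (⊤ : ℕ∞) φ D2
  bijOn : Set.BijOn φ D2 D2
  smooth_inv : ∃ ψ : ℂ → ℂ, ContDiffOn ℝ (⊤ : ℕ∞) ψ D2 ∧ Set.LeftInvOn ψ φ D2 ∧ Set.RightInvOn ψ φ D2
  area : ∀ p ∈ D2, (fderivWithin ℝ φ D2 p).det = 1
  rot_near_bd : ∃ δ > (0:ℝ), ∀ p ∈ D2, 1 - δ ≤ ‖p‖ → φ p = rotate θ₀ p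

/-- `f` is the action function of `(φ,θ₀)`:
`Df_p(v) = β_{φ(p)}(Dφ_p(v)) − β_p(v)` on the disk and `f = θ₀` on the boundary. -/
structure IsActionFunction (φ : ℂ → ℂ) (θ₀ : ℝ) (f : ℂ → ℝ) : Prop where
  smooth : ContDiffOn ℝ (⊤ : ℕ∞) f D2
  deriv : ∀ p ∈ D2, ∀ v : ℂ,
    fderivWithin ℝ f D2 p v = beta (φ p) (fderivWithin ℝ φ D2 p v) - beta p v
  boundary : ∀ p : ℂ, ‖p‖ = 1 → f p = θ₀

/-- The Calabi invariant: the average `∫_{D²} f ω` with respect to the normalized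
area form `ω = (1/π) dx∧dy`. -/
def Calabi (f : ℂ → ℝ) : ℝ := (1 / Real.pi) * ∫ p in D2, f p

/-- `x` is a periodic orbit of `φ` of period `d ≥ 1`. -/
def IsPeriodicOrbit (φ : ℂ → ℂ) (x : ℂ) (d : ℕ) : Prop :=
  x ∈ D2 ∧ 1 ≤ d ∧ φ^[d] x = x ∧
    ∀ i < d, ∀ j < d, φ^[i] x = φ^[j] x → i = j

/-- The total action `𝒜(γ) = Σ_{i=0}^{d−1} f(φ^i(x))` of a periodic orbit. -/
def totalAction (φ : ℂ → ℂ) (f : ℂ → ℝ) (x : ℂ) (d : ℕ) : ℝ :=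
  ∑ i ∈ Finset.range d, f (φ^[i] x)


/-- A smooth 1-form `B` on `D²` which is a primitive of `ω = (1/π)dx∧dy`
(`∂₁B₂ − ∂₂B₁ = 1/π`) satisfying the boundary normalization `B_p((−p₂,p₁)) = 1/(2π)`
for `|p| = 1`. -/
structure IsNormalizedPrimitive (B : ℂ → ℂ →L[ℝ] ℝ) : Prop where
  smooth : ContDiffOn ℝ (⊤ : ℕ∞) B D2
  primitive : ∀ p ∈ D2,
    fderivWithin ℝ (fun q => B q Complex.I) D2 p 1
      - fderivWithin ℝ (fun q => B q 1) D2 p Complex.I = 1 / Real.pi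
  boundary : ∀ p : ℂ, ‖p‖ = 1 → B p (Complex.I * p) = 1 / (2 * Real.pi)

/-- `f` is the action function of `(φ,θ₀)` with respect to the primitive `B`:
`Df_p(v) = B_{φ(p)}(Dφ_p(v)) − B_p(v)` on the disk and `f = θ₀` on the boundary. -/
structure IsActionFunctionFor (B : ℂ → ℂ →L[ℝ] ℝ) (φ : ℂ → ℂ) (θ₀ : ℝ) (f : ℂ → ℝ) :
    Prop where
  smooth : ContDiffOn ℝ (⊤ : ℕ∞) f D2
  deriv : ∀ p ∈ D2, ∀ v : ℂ,
    fderivWithin ℝ f D2 p v = B (φ p) (fderivWithin ℝ φ D2 p v) - B p v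
  boundary : ∀ p : ℂ, ‖p‖ = 1 → f p = θ₀

lemma abs_rotate (θ : ℝ) (z : ℂ) : ‖rotate θ z‖ = ‖z‖ := by
  simp only [rotate, norm_mul, Complex.norm_exp]
  have : (2 * ↑Real.pi * ↑θ * Complex.I).re = 0 := by simp
  rw [this, Real.exp_zero, one_mul]

lemma rotate_rotate_neg (θ : ℝ) (z : ℂ) : rotate θ (rotate (-θ) z) = z := by
  simp only [rotate, ← mul_assoc, ← Complex.exp_add]
  have : (2 * ↑Real.pi * ↑θ * Complex.I + 2 * ↑Real.pi * ↑(-θ) * Complex.I : ℂ) = 0 := by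
    push_cast; ring
  rw [this, Complex.exp_zero, one_mul]

lemma mem_D2_iff {z : ℂ} : z ∈ D2 ↔ ‖z‖ ≤ 1 := by
  simp [D2, mem_closedBall_zero_iff]

lemma mem_ball_iff' {z : ℂ} : z ∈ Metric.ball (0:ℂ) 1 ↔ ‖z‖ < 1 := by
  simp [mem_ball_zero_iff]
open Topology

lemma convex_D2 : Convex ℝ D2 := convex_closedBall 0 1
lemma isCompact_D2 : IsCompact D2 := isCompact_closedBall 0 1
lemma uniqueDiffOn_D2 : UniqueDiffOn ℝ D2 :=
  uniqueDiffOn_convex convex_D2 (by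
    rw [show D2 = Metric.closedBall 0 1 from rfl, interior_closedBall (0:ℂ) one_ne_zero]
    exact ⟨0, mem_ball_self one_pos⟩)

lemma ball_subset_D2 : Metric.ball (0:ℂ) 1 ⊆ D2 := ball_subset_closedBall

lemma D2_mem_nhds {p : ℂ} (hp : p ∈ Metric.ball (0:ℂ) 1) : D2 ∈ 𝓝 p :=
  Filter.mem_of_superset (isOpen_ball.mem_nhds hp) ball_subset_D2

lemma smul_mem_ball {t : ℝ} {x : ℂ} (ht : t ∈ Set.Icc (0:ℝ) 1) (hx : x ∈ Metric.ball (0:ℂ) 1) :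
    t • x ∈ Metric.ball (0:ℂ) 1 := by
  simp only [mem_ball_zero_iff] at hx ⊢
  calc ‖t • x‖ = |t| * ‖x‖ := by rw [norm_smul, Real.norm_eq_abs]
  _ ≤ 1 * ‖x‖ := by
      apply mul_le_mul_of_nonneg_right _ (norm_nonneg x)
      rw [abs_le]; exact ⟨by linarith [ht.1], ht.2⟩
  _ < 1 := by simpa using hx

lemma smul_mem_D2 {t : ℝ} {x : ℂ} (ht : t ∈ Set.Icc (0:ℝ) 1) (hx : x ∈ D2) :
    t • x ∈ D2 := by
  simp only [D2, mem_closedBall_zero_iff] at hx ⊢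
  calc ‖t • x‖ = |t| * ‖x‖ := by rw [norm_smul, Real.norm_eq_abs]
  _ ≤ 1 * 1 := by
      apply mul_le_mul _ hx (norm_nonneg x) zero_le_one
      rw [abs_le]; exact ⟨by linarith [ht.1], ht.2⟩
  _ = 1 := one_mul 1

lemma mem_D2_of_ball {x : ℂ} (hx : x ∈ Metric.ball (0:ℂ) 1) : x ∈ D2 := ball_subset_D2 hx

/-- symmetry from the single coordinate relation -/
lemma symm_of_coord (T : ℂ →L[ℝ] ℂ →L[ℝ] ℝ) (h : T 1 Complex.I = T Complex.I 1)
    (u w : ℂ) : T u w = T w u := by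
  have hu : u = u.re • (1:ℂ) + u.im • Complex.I := by
    apply Complex.ext <;> simp
  have hw : w = w.re • (1:ℂ) + w.im • Complex.I := by
    apply Complex.ext <;> simp
  rw [hu, hw]
  simp only [map_add, _root_.map_smul, ContinuousLinearMap.add_apply, ContinuousLinearMap.smul_apply,
    smul_eq_mul]
  linear_combination (u.re * w.im - u.im * w.re) * h

section Poincare
variable {C : ℂ → ℂ →L[ℝ] ℝ}

lemma fderivWithin_clm_apply_eq (hC : ContDiffOn ℝ (⊤ : ℕ∞) C D2) {p : ℂ} (hp : p ∈ D2) (v w : ℂ) :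
    fderivWithin ℝ (fun q => C q v) D2 p w = fderivWithin ℝ C D2 p w v := by
  have hdiff : DifferentiableWithinAt ℝ C D2 p := (hC.differentiableOn (by simp)) p hp
  have h := ((ContinuousLinearMap.apply ℝ ℝ v).hasFDerivAt.comp_hasFDerivWithinAt p
    hdiff.hasFDerivWithinAt).fderivWithin (uniqueDiffOn_D2 p hp)
  have : (fun q => C q v) = (fun A : ℂ →L[ℝ] ℝ => (ContinuousLinearMap.apply ℝ ℝ v) A) ∘ C := by
    ext q; rfl
  rw [this, h]
  rfl

end Poincare

/-- interior full derivative -/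
lemma hasFDerivAt_of_contDiffOn {E : Type*} [NormedAddCommGroup E] [NormedSpace ℝ E]
    {C : ℂ → E} (hC : ContDiffOn ℝ (⊤ : ℕ∞) C D2) {q : ℂ}
    (hq : q ∈ Metric.ball (0:ℂ) 1) :
    HasFDerivAt C (fderivWithin ℝ C D2 q) q := by
  have hnb : D2 ∈ 𝓝 q := D2_mem_nhds hq
  have h1 : DifferentiableAt ℝ C q := (hC.contDiffAt hnb).differentiableAt (by simp)
  rw [fderivWithin_of_mem_nhds hnb]
  exact h1.hasFDerivAt
section Poincare2
open intervalIntegral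
variable {C : ℂ → ℂ →L[ℝ] ℝ}

lemma contOn_ray {E : Type*} [TopologicalSpace E] {C : ℂ → E}
    (hC : ContinuousOn C D2) {x : ℂ} (hx : x ∈ D2) :
    ContinuousOn (fun t : ℝ => C (t • x)) (Set.Icc 0 1) := by
  apply hC.comp ((continuous_id.smul continuous_const).continuousOn)
  intro t ht
  exact smul_mem_D2 ht hx

set_option maxHeartbeats 1000000 in
lemma poincare (hC : ContDiffOn ℝ (⊤ : ℕ∞) C D2)
    (hsym : ∀ p ∈ D2, ∀ u w, fderivWithin ℝ C D2 p u w = fderivWithin ℝ C D2 p w u) :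
    ∃ g : ℂ → ℝ, ContinuousOn g D2 ∧ ∀ p ∈ Metric.ball (0:ℂ) 1, HasFDerivAt g (C p) p := by
  classical
  set DC : ℂ → ℂ →L[ℝ] ℂ →L[ℝ] ℝ := fderivWithin ℝ C D2 with hDCdef
  have hContC : ContinuousOn C D2 := hC.continuousOn
  have hContDC : ContinuousOn DC D2 :=
    (hC.fderivWithin (m := (⊤ : ℕ∞)) uniqueDiffOn_D2 (by simp)).continuousOn
  obtain ⟨M₀, hM₀⟩ := isCompact_D2.exists_bound_of_continuousOn (f := C) hContC
  obtain ⟨K₀, hK₀⟩ := isCompact_D2.exists_bound_of_continuousOn (f := DC) hContDC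
  set M := max M₀ 0 with hMdef
  set K := max K₀ 0 with hKdef
  have hM : ∀ p ∈ D2, ‖C p‖ ≤ M := fun p hp => (hM₀ p hp).trans (le_max_left _ _)
  have hK : ∀ p ∈ D2, ‖DC p‖ ≤ K := fun p hp => (hK₀ p hp).trans (le_max_left _ _)
  have hM0 : 0 ≤ M := le_max_right _ _
  have hK0 : 0 ≤ K := le_max_right _ _
  set g : ℂ → ℝ := fun p => ∫ t in (0:ℝ)..1, C (t • p) p with hgdef
  have hIcc : Set.uIoc (0:ℝ) 1 = Set.Ioc 0 1 := Set.uIoc_of_le zero_le_one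
  have huIcc : Set.uIcc (0:ℝ) 1 = Set.Icc 0 1 := Set.uIcc_of_le zero_le_one
  -- continuity of the integrand for x ∈ D2
  have hcont_int : ∀ x ∈ D2, ContinuousOn (fun t : ℝ => C (t • x) x) (Set.Icc 0 1) :=
    fun x hx => (contOn_ray hContC hx).clm_apply continuousOn_const
  have hint : ∀ x ∈ D2, IntervalIntegrable (fun t : ℝ => C (t • x) x) MeasureTheory.volume 0 1 :=
    fun x hx => ContinuousOn.intervalIntegrable (by rw [huIcc]; exact hcont_int x hx)
  -- Lipschitz bound for C on D2
  have hlipC : ∀ p ∈ D2, ∀ q ∈ D2, ‖C p - C q‖ ≤ K * ‖p - q‖ := by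
    intro p hp q hq
    exact convex_D2.norm_image_sub_le_of_norm_fderivWithin_le
      (hC.differentiableOn (by simp)) hK hq hp
  -- g is Lipschitz on D2
  have hglip : ∀ p ∈ D2, ∀ q ∈ D2, ‖g p - g q‖ ≤ (M + K) * ‖p - q‖ := by
    intro p hp q hq
    have h1 : g p - g q = ∫ t in (0:ℝ)..1, (C (t • p) p - C (t • q) q) :=
      (intervalIntegral.integral_sub (hint p hp) (hint q hq)).symm
    rw [h1]
    have := intervalIntegral.norm_integral_le_of_norm_le_const
      (C := (M + K) * ‖p - q‖)
      (f := fun t : ℝ => C (t • p) p - C (t • q) q) (a := 0) (b := 1) ?_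
    · simpa using this
    · intro t ht
      rw [hIcc] at ht
      have ht' : t ∈ Set.Icc (0:ℝ) 1 := ⟨le_of_lt ht.1, ht.2⟩
      show ‖C (t • p) p - C (t • q) q‖ ≤ (M + K) * ‖p - q‖
      have htp : t • p ∈ D2 := smul_mem_D2 ht' hp
      have htq : t • q ∈ D2 := smul_mem_D2 ht' hq
      have e1 : C (t • p) p - C (t • q) q
          = C (t • p) (p - q) + (C (t • p) - C (t • q)) q := by
        simp [map_sub, ContinuousLinearMap.sub_apply]
      rw [e1]
      have b1 : ‖C (t • p) (p - q)‖ ≤ M * ‖p - q‖ :=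
        le_trans (ContinuousLinearMap.le_opNorm _ _)
          (mul_le_mul_of_nonneg_right (hM _ htp) (norm_nonneg _))
      have b2 : ‖(C (t • p) - C (t • q)) q‖ ≤ K * ‖p - q‖ := by
        have hq1 : ‖q‖ ≤ 1 := by simpa [D2, mem_closedBall_zero_iff] using hq
        have h2 : ‖C (t • p) - C (t • q)‖ ≤ K * ‖t • p - t • q‖ := hlipC _ htp _ htq
        have h3 : ‖t • p - t • q‖ ≤ ‖p - q‖ := by
          rw [← smul_sub, norm_smul, Real.norm_eq_abs, abs_of_nonneg ht'.1]
          calc t * ‖p - q‖ ≤ 1 * ‖p - q‖ :=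
            mul_le_mul_of_nonneg_right ht'.2 (norm_nonneg _)
          _ = ‖p - q‖ := one_mul _
        calc ‖(C (t • p) - C (t • q)) q‖ ≤ ‖C (t • p) - C (t • q)‖ * ‖q‖ :=
          ContinuousLinearMap.le_opNorm _ _
        _ ≤ ‖C (t • p) - C (t • q)‖ := mul_le_of_le_one_right (norm_nonneg _) hq1
        _ ≤ K * ‖t • p - t • q‖ := h2
        _ ≤ K * ‖p - q‖ := mul_le_mul_of_nonneg_left h3 hK0
      calc ‖C (t • p) (p - q) + (C (t • p) - C (t • q)) q‖
          ≤ ‖C (t • p) (p - q)‖ + ‖(C (t • p) - C (t • q)) q‖ := norm_add_le _ _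
      _ ≤ M * ‖p - q‖ + K * ‖p - q‖ := add_le_add b1 b2
      _ = (M + K) * ‖p - q‖ := by ring
  have hgcont : ContinuousOn g D2 := by
    apply LipschitzOnWith.continuousOn (K := Real.toNNReal (M + K))
    apply LipschitzOnWith.of_dist_le_mul
    intro p hp q hq
    rw [dist_eq_norm, dist_eq_norm]
    have := hglip p hp q hq
    rwa [Real.coe_toNNReal _ (by positivity)]
  refine ⟨g, hgcont, ?_⟩
  intro x₀ hx₀
  have hx₀D : x₀ ∈ D2 := ball_subset_D2 hx₀
  have hx₀n : ‖x₀‖ < 1 := by simpa [mem_ball_zero_iff] using hx₀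
  set ε : ℝ := (1 - ‖x₀‖) / 2 with hεdef
  have hε : 0 < ε := by simp only [hεdef]; linarith
  have hball : Metric.ball x₀ ε ⊆ Metric.ball (0:ℂ) 1 := by
    intro y hy
    have h1 : ‖y - x₀‖ < ε := by rwa [mem_ball_iff_norm] at hy
    have h2 : ‖y‖ ≤ ‖x₀‖ + ‖y - x₀‖ := norm_le_norm_add_norm_sub' y x₀
    rw [mem_ball_zero_iff]
    have : ε + ‖x₀‖ < 1 := by simp only [hεdef]; linarith
    linarith
  set F' : ℂ → ℝ → ℂ →L[ℝ] ℝ := fun x t =>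
    (C (t • x)).comp (ContinuousLinearMap.id ℝ ℂ)
      + ((DC (t • x)).comp (t • ContinuousLinearMap.id ℝ ℂ)).flip x with hF'def
  -- continuity of F' x₀ on [0,1]
  have c1 : ContinuousOn (fun t : ℝ => C (t • x₀)) (Set.Icc 0 1) := contOn_ray hContC hx₀D
  have c2 : ContinuousOn (fun t : ℝ => DC (t • x₀)) (Set.Icc 0 1) := contOn_ray hContDC hx₀D
  have c3 : Continuous (fun t : ℝ => t • ContinuousLinearMap.id ℝ ℂ) :=
    continuous_id.smul continuous_const
  have c4 : ContinuousOn (fun t : ℝ => (DC (t • x₀)).comp (t • ContinuousLinearMap.id ℝ ℂ))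
      (Set.Icc 0 1) := c2.clm_comp c3.continuousOn
  have c5 : ContinuousOn
      (fun t : ℝ => ((DC (t • x₀)).comp (t • ContinuousLinearMap.id ℝ ℂ)).flip)
      (Set.Icc 0 1) := (ContinuousLinearMap.flipₗᵢ ℝ ℂ ℂ ℝ).continuous.comp_continuousOn c4
  have c7 : ContinuousOn (fun t : ℝ => (C (t • x₀)).comp (ContinuousLinearMap.id ℝ ℂ))
      (Set.Icc 0 1) := c1.clm_comp continuousOn_const
  have hF'cont : ContinuousOn (F' x₀) (Set.Icc 0 1) :=
    c7.add (c5.clm_apply continuousOn_const)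
  have hF'int : IntervalIntegrable (F' x₀) MeasureTheory.volume 0 1 :=
    ContinuousOn.intervalIntegrable (by rw [huIcc]; exact hF'cont)
  have hmeasI : MeasurableSet (Set.uIoc (0:ℝ) 1) := by rw [hIcc]; exact measurableSet_Ioc
  have hsubI : Set.uIoc (0:ℝ) 1 ⊆ Set.Icc 0 1 := by rw [hIcc]; exact Set.Ioc_subset_Icc_self
  -- the dominated-derivative lemma
  have key := intervalIntegral.hasFDerivAt_integral_of_dominated_of_fderiv_le
    (𝕜 := ℝ) (μ := MeasureTheory.volume) (F := fun x t => C (t • x) x) (F' := F')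
    (x₀ := x₀) (a := 0) (b := 1) (bound := fun _ => M + K) (Metric.ball_mem_nhds x₀ hε)
    ?_ (hint x₀ hx₀D) ?_ ?_ ?_ ?_
  · -- conclude
    have happly : (∫ t in (0:ℝ)..1, F' x₀ t) = C x₀ := by
      ext v
      rw [ContinuousLinearMap.intervalIntegral_apply hF'int v]
      have hptwise : ∀ t ∈ Set.Icc (0:ℝ) 1,
          F' x₀ t v = C (t • x₀) v + t * (DC (t • x₀) x₀ v) := by
        intro t ht
        have htx : t • x₀ ∈ D2 := smul_mem_D2 ht hx₀D
        have h1 : F' x₀ t v = C (t • x₀) v + DC (t • x₀) (t • v) x₀ := by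
          simp only [hF'def, ContinuousLinearMap.add_apply, ContinuousLinearMap.comp_id,
            ContinuousLinearMap.flip_apply, ContinuousLinearMap.coe_comp', Function.comp_apply,
            ContinuousLinearMap.smul_apply, ContinuousLinearMap.coe_id', id_eq]
        rw [h1, hsym _ htx (t • v) x₀, ContinuousLinearMap.map_smul, smul_eq_mul]
      have hFTC : (∫ t in (0:ℝ)..1, (C (t • x₀) v + t * (DC (t • x₀) x₀ v))) = C x₀ v := by
        have hderiv : ∀ t ∈ Set.uIcc (0:ℝ) 1, HasDerivAt (fun s : ℝ => s * (C (s • x₀) v))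
            (C (t • x₀) v + t * (DC (t • x₀) x₀ v)) t := by
          intro t ht
          rw [huIcc] at ht
          have htb : t • x₀ ∈ Metric.ball (0:ℂ) 1 := smul_mem_ball ht hx₀
          have hCd : HasFDerivAt C (DC (t • x₀)) (t • x₀) := hasFDerivAt_of_contDiffOn hC htb
          have hray : HasDerivAt (fun s : ℝ => s • x₀) x₀ t := by
            simpa using (hasDerivAt_id t).smul_const x₀
          have hw : HasDerivAt (fun s : ℝ => C (s • x₀)) (DC (t • x₀) x₀) t := by
            exact hCd.comp_hasDerivAt t hray
          have hwv : HasDerivAt (fun s : ℝ => C (s • x₀) v) (DC (t • x₀) x₀ v) t := by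
            simpa using hw.clm_apply (hasDerivAt_const t v)
          have := (hasDerivAt_id t).mul hwv
          exact this.congr_deriv (by simp)
        have hcontD : ContinuousOn
            (fun t : ℝ => C (t • x₀) v + t * (DC (t • x₀) x₀ v)) (Set.uIcc 0 1) := by
          rw [huIcc]
          exact (c1.clm_apply continuousOn_const).add
            (continuousOn_id.mul ((c2.clm_apply continuousOn_const).clm_apply
              continuousOn_const))
        have := intervalIntegral.integral_eq_sub_of_hasDerivAt hderiv
          (hcontD.intervalIntegrable)
        simpa using this
      rw [intervalIntegral.integral_congr
        (g := fun t : ℝ => C (t • x₀) v + t * (DC (t • x₀) x₀ v))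
        (fun t ht => hptwise t (huIcc ▸ ht)), hFTC]
    rw [← happly]
    exact key
  · -- measurability of F x for x near x₀
    filter_upwards [isOpen_ball.mem_nhds hx₀] with x hx
    exact ((hcont_int x (ball_subset_D2 hx)).mono hsubI).aestronglyMeasurable hmeasI
  · -- measurability of F' x₀
    exact ((hF'cont.mono hsubI)).aestronglyMeasurable hmeasI
  · -- bound
    apply MeasureTheory.ae_of_all
    intro t ht x hx
    have htIcc : t ∈ Set.Icc (0:ℝ) 1 := hsubI ht
    have hxD : x ∈ D2 := ball_subset_D2 (hball hx)
    have htx : t • x ∈ D2 := smul_mem_D2 htIcc hxD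
    have hx1 : ‖x‖ ≤ 1 := by simpa [D2, mem_closedBall_zero_iff] using hxD
    have hsmul : ‖t • ContinuousLinearMap.id ℝ ℂ‖ ≤ 1 := by
      apply ContinuousLinearMap.opNorm_le_bound _ zero_le_one
      intro v
      rw [ContinuousLinearMap.smul_apply, ContinuousLinearMap.id_apply, norm_smul,
        Real.norm_eq_abs, abs_of_nonneg htIcc.1, one_mul]
      exact mul_le_of_le_one_left (norm_nonneg v) htIcc.2
    have hB : ‖(DC (t • x)).comp (t • ContinuousLinearMap.id ℝ ℂ)‖ ≤ K := by
      calc ‖(DC (t • x)).comp (t • ContinuousLinearMap.id ℝ ℂ)‖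
          ≤ ‖DC (t • x)‖ * ‖t • ContinuousLinearMap.id ℝ ℂ‖ :=
        ContinuousLinearMap.opNorm_comp_le _ _
      _ ≤ K * 1 := mul_le_mul (hK _ htx) hsmul (norm_nonneg _) hK0
      _ = K := mul_one _
    have hflip : ‖((DC (t • x)).comp (t • ContinuousLinearMap.id ℝ ℂ)).flip x‖ ≤ K := by
      calc ‖((DC (t • x)).comp (t • ContinuousLinearMap.id ℝ ℂ)).flip x‖
          ≤ ‖((DC (t • x)).comp (t • ContinuousLinearMap.id ℝ ℂ)).flip‖ * ‖x‖ :=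
        ContinuousLinearMap.le_opNorm _ _
      _ = ‖(DC (t • x)).comp (t • ContinuousLinearMap.id ℝ ℂ)‖ * ‖x‖ := by
          rw [ContinuousLinearMap.opNorm_flip]
      _ ≤ K * 1 := mul_le_mul hB hx1 (norm_nonneg _) hK0
      _ = K := mul_one _
    calc ‖F' x t‖ ≤ ‖(C (t • x)).comp (ContinuousLinearMap.id ℝ ℂ)‖
        + ‖((DC (t • x)).comp (t • ContinuousLinearMap.id ℝ ℂ)).flip x‖ := norm_add_le _ _
    _ ≤ M + K := by
        apply add_le_add _ hflip
        rw [ContinuousLinearMap.comp_id]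
        exact hM _ htx
  · exact intervalIntegrable_const
  · -- differentiability
    apply MeasureTheory.ae_of_all
    intro t ht x hx
    have htIcc : t ∈ Set.Icc (0:ℝ) 1 := hsubI ht
    have hxb : x ∈ Metric.ball (0:ℂ) 1 := hball hx
    have htx : t • x ∈ Metric.ball (0:ℂ) 1 := smul_mem_ball htIcc hxb
    have hlin : HasFDerivAt (fun y : ℂ => t • y) (t • ContinuousLinearMap.id ℝ ℂ) x := by
      have h0 : HasFDerivAt (id : ℂ → ℂ) (ContinuousLinearMap.id ℝ ℂ) x := hasFDerivAt_id x
      have := h0.const_smul t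
      exact this
    have hCd : HasFDerivAt C (DC (t • x)) (t • x) := hasFDerivAt_of_contDiffOn hC htx
    have hc : HasFDerivAt (fun y : ℂ => C (t • y))
        ((DC (t • x)).comp (t • ContinuousLinearMap.id ℝ ℂ)) x := by
      exact hCd.comp x hlin
    exact hc.clm_apply (hasFDerivAt_id x)
end Poincare2
set_option maxHeartbeats 1000000 in
/-- The total action of a periodic orbit does not depend on the choice of normalized
primitive of `ω` used to define the action function. -/
theorem totalAction_indep_of_primitive (θ₀ : ℝ) (φ : ℂ → ℂ) (hG : MemG φ θ₀)
    (B₁ B₂ : ℂ → ℂ →L[ℝ] ℝ) (hB₁ : IsNormalizedPrimitive B₁)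
    (hB₂ : IsNormalizedPrimitive B₂) (f₁ f₂ : ℂ → ℝ)
    (hf₁ : IsActionFunctionFor B₁ φ θ₀ f₁) (hf₂ : IsActionFunctionFor B₂ φ θ₀ f₂)
    (x : ℂ) (d : ℕ) (hx : IsPeriodicOrbit φ x d) :
    totalAction φ f₁ x d = totalAction φ f₂ x d := by
  classical
  set C : ℂ → ℂ →L[ℝ] ℝ := fun p => B₁ p - B₂ p with hCdef
  have hCsmooth : ContDiffOn ℝ (⊤ : ℕ∞) C D2 := hB₁.smooth.sub hB₂.smooth
  have hclosed : ∀ p ∈ D2,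
      fderivWithin ℝ C D2 p 1 Complex.I = fderivWithin ℝ C D2 p Complex.I 1 := by
    intro p hp
    have hd1 : DifferentiableWithinAt ℝ B₁ D2 p := (hB₁.smooth.differentiableOn (by simp)) p hp
    have hd2 : DifferentiableWithinAt ℝ B₂ D2 p := (hB₂.smooth.differentiableOn (by simp)) p hp
    have hsub : fderivWithin ℝ C D2 p = fderivWithin ℝ B₁ D2 p - fderivWithin ℝ B₂ D2 p :=
      fderivWithin_sub (uniqueDiffOn_D2 p hp) hd1 hd2
    have e1 := hB₁.primitive p hp
    have e2 := hB₂.primitive p hp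
    rw [fderivWithin_clm_apply_eq hB₁.smooth hp Complex.I 1,
        fderivWithin_clm_apply_eq hB₁.smooth hp 1 Complex.I] at e1
    rw [fderivWithin_clm_apply_eq hB₂.smooth hp Complex.I 1,
        fderivWithin_clm_apply_eq hB₂.smooth hp 1 Complex.I] at e2
    rw [hsub]
    simp only [ContinuousLinearMap.sub_apply]
    linarith
  have hsym : ∀ p ∈ D2, ∀ u w, fderivWithin ℝ C D2 p u w = fderivWithin ℝ C D2 p w u :=
    fun p hp => symm_of_coord _ (hclosed p hp)
  obtain ⟨g, hgcont, hg⟩ := poincare hCsmooth hsym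
  have hφmaps : Set.MapsTo φ D2 D2 := hG.bijOn.mapsTo
  have hφcirc : ∀ p : ℂ, ‖p‖ = 1 → φ p = rotate θ₀ p := by
    intro p hp1
    obtain ⟨δ, hδ, hrot⟩ := hG.rot_near_bd
    exact hrot p (mem_D2_iff.2 hp1.le) (by linarith)
  have hφint : ∀ p ∈ Metric.ball (0:ℂ) 1, φ p ∈ Metric.ball (0:ℂ) 1 := by
    intro p hp
    have hpD : p ∈ D2 := ball_subset_D2 hp
    have hφpD : φ p ∈ D2 := hφmaps hpD
    rcases lt_or_eq_of_le (mem_D2_iff.1 hφpD) with h | h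
    · exact mem_ball_iff'.2 h
    · exfalso
      set b : ℂ := rotate (-θ₀) (φ p) with hbdef
      have hb1 : ‖b‖ = 1 := by rw [hbdef, abs_rotate]; exact h
      have hbD : b ∈ D2 := mem_D2_iff.2 hb1.le
      have hφb : φ b = φ p := by rw [hφcirc b hb1, hbdef, rotate_rotate_neg]
      have hbp := hG.bijOn.injOn hbD hpD hφb
      rw [← hbp, mem_ball_iff', hb1] at hp
      exact lt_irrefl 1 hp
  have hball0 : (0:ℂ) ∈ Metric.ball (0:ℂ) 1 := mem_ball_self one_pos
  set F : ℂ → ℝ := fun q => (f₁ q - f₂ q) - g (φ q) + g q with hFdef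
  have hF0 : ∀ p ∈ Metric.ball (0:ℂ) 1, HasFDerivAt F (0 : ℂ →L[ℝ] ℝ) p := by
    intro p hp
    have hpD : p ∈ D2 := ball_subset_D2 hp
    have hd1 : HasFDerivAt f₁ (fderivWithin ℝ f₁ D2 p) p :=
      hasFDerivAt_of_contDiffOn hf₁.smooth hp
    have hd2 : HasFDerivAt f₂ (fderivWithin ℝ f₂ D2 p) p :=
      hasFDerivAt_of_contDiffOn hf₂.smooth hp
    have hdφ : HasFDerivAt φ (fderivWithin ℝ φ D2 p) p :=
      hasFDerivAt_of_contDiffOn hG.smooth hp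
    have hdg : HasFDerivAt g (C p) p := hg p hp
    have hdgφp : HasFDerivAt g (C (φ p)) (φ p) := hg (φ p) (hφint p hp)
    have hdgφ : HasFDerivAt (fun q => g (φ q))
        ((C (φ p)).comp (fderivWithin ℝ φ D2 p)) p := by
      exact hdgφp.comp p hdφ
    have hcomb := ((hd1.sub hd2).sub hdgφ).add hdg
    have heq : fderivWithin ℝ f₁ D2 p - fderivWithin ℝ f₂ D2 p
        - (C (φ p)).comp (fderivWithin ℝ φ D2 p) + C p = 0 := by
      ext v
      simp only [ContinuousLinearMap.add_apply, ContinuousLinearMap.sub_apply,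
        ContinuousLinearMap.coe_comp', Function.comp_apply, ContinuousLinearMap.zero_apply]
      rw [hf₁.deriv p hpD v, hf₂.deriv p hpD v]
      simp only [hCdef, ContinuousLinearMap.sub_apply]
      ring
    rw [heq] at hcomb
    exact hcomb
  set c : ℝ := F 0 with hcdef
  have hconst : ∀ p ∈ Metric.ball (0:ℂ) 1, F p = c := by
    intro p hp
    exact (convex_ball (0:ℂ) 1).is_const_of_fderivWithin_eq_zero
      (fun q hq => (hF0 q hq).differentiableAt.differentiableWithinAt)
      (fun q hq => by
        rw [fderivWithin_of_mem_nhds (isOpen_ball.mem_nhds hq)]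
        exact (hF0 q hq).fderiv)
      hp hball0
  have hFcont : ContinuousOn F D2 := by
    have h1 : ContinuousOn (fun q => f₁ q - f₂ q) D2 :=
      (hf₁.smooth.continuousOn).sub (hf₂.smooth.continuousOn)
    have h2 : ContinuousOn (fun q => g (φ q)) D2 :=
      hgcont.comp hG.smooth.continuousOn hφmaps
    exact (h1.sub h2).add hgcont
  have hFall : ∀ p ∈ D2, F p = c := by
    intro p hp
    rcases lt_or_eq_of_le (mem_D2_iff.1 hp) with hlt | heq1
    · exact hconst p (mem_ball_iff'.2 hlt)
    · haveI : (𝓝[Set.Ico (0:ℝ) 1] (1:ℝ)).NeBot := by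
        refine mem_closure_iff_nhdsWithin_neBot.1 ?_
        rw [closure_Ico (zero_ne_one (α := ℝ))]
        exact ⟨zero_le_one, le_rfl⟩
      have hmem : ∀ r ∈ Set.Ico (0:ℝ) 1, r • p ∈ Metric.ball (0:ℂ) 1 := by
        intro r hr
        rw [mem_ball_zero_iff, norm_smul, Real.norm_eq_abs, abs_of_nonneg hr.1]
        have hnp : ‖p‖ = 1 := by exact heq1
        rw [hnp, mul_one]; exact hr.2
      have h1 : Filter.Tendsto (fun r : ℝ => r • p) (𝓝[Set.Ico (0:ℝ) 1] 1) (𝓝[D2] p) := by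
        rw [tendsto_nhdsWithin_iff]
        constructor
        · have ht : Filter.Tendsto (fun r : ℝ => r • p) (𝓝 1) (𝓝 ((1:ℝ) • p)) :=
            (continuous_id.smul continuous_const).tendsto 1
          rw [one_smul] at ht
          exact ht.mono_left nhdsWithin_le_nhds
        · exact Filter.eventually_of_mem self_mem_nhdsWithin
            (fun r hr => ball_subset_D2 (hmem r hr))
      have h2 : Filter.Tendsto (fun r : ℝ => F (r • p)) (𝓝[Set.Ico (0:ℝ) 1] 1) (𝓝 (F p)) :=
        ((hFcont p hp).tendsto).comp h1
      have h3 : Filter.Tendsto (fun r : ℝ => F (r • p)) (𝓝[Set.Ico (0:ℝ) 1] 1) (𝓝 c) := by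
        apply Filter.Tendsto.congr' _ (tendsto_const_nhds (α := ℝ))
        exact Filter.eventually_of_mem self_mem_nhdsWithin
          (fun r hr => (hconst _ (hmem r hr)).symm)
      exact tendsto_nhds_unique h2 h3
  have hbd : ∀ p : ℂ, ‖p‖ = 1 → g p - g (φ p) = c := by
    intro p hp1
    have hpD : p ∈ D2 := mem_D2_iff.2 hp1.le
    have hFp := hFall p hpD
    simp only [hFdef] at hFp
    rw [hf₁.boundary p hp1, hf₂.boundary p hp1] at hFp
    linarith
  have hcirc_iter : ∀ n : ℕ, ‖φ^[n] 1‖ = 1 := by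
    intro n; induction n with
    | zero => simp
    | succ n ih => rw [Function.iterate_succ_apply', hφcirc _ ih, abs_rotate]; exact ih
  have hiter : ∀ n : ℕ, g 1 - g (φ^[n] 1) = n * c := by
    intro n; induction n with
    | zero => simp
    | succ n ih =>
        have hb := hbd (φ^[n] 1) (hcirc_iter n)
        rw [Function.iterate_succ_apply']
        push_cast
        linarith
  obtain ⟨Mg, hMg⟩ := isCompact_D2.exists_bound_of_continuousOn (f := g) hgcont
  have hc0 : c = 0 := by
    by_contra hc
    have habs : 0 < |c| := abs_pos.2 hc
    obtain ⟨n, hn⟩ := exists_nat_gt ((2 * Mg) / |c|)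
    have h1 : (n:ℝ) * c = g 1 - g (φ^[n] 1) := (hiter n).symm
    have hg1 : |g 1| ≤ Mg := by
      have := hMg 1 (mem_D2_iff.2 (by simp))
      rwa [Real.norm_eq_abs] at this
    have hg2 : |g (φ^[n] 1)| ≤ Mg := by
      have := hMg _ (mem_D2_iff.2 (hcirc_iter n).le)
      rwa [Real.norm_eq_abs] at this
    have h2 : |(n:ℝ) * c| ≤ 2 * Mg := by
      rw [h1, sub_eq_add_neg]
      calc |g 1 + -(g (φ^[n] 1))| ≤ |g 1| + |(-(g (φ^[n] 1)))| := abs_add_le _ _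
      _ = |g 1| + |g (φ^[n] 1)| := by rw [abs_neg]
      _ ≤ 2 * Mg := by linarith
    rw [abs_mul, Nat.abs_cast] at h2
    have h4 : 2 * Mg < n * |c| := by rwa [div_lt_iff₀ habs] at hn
    linarith
  have hhp : ∀ p ∈ D2, f₁ p - f₂ p = g (φ p) - g p := by
    intro p hp
    have hFp := hFall p hp
    simp only [hFdef] at hFp
    rw [hc0] at hFp
    linarith
  have horb : ∀ i : ℕ, φ^[i] x ∈ D2 := by
    intro i; induction i with
    | zero => exact hx.1
    | succ i ih => rw [Function.iterate_succ_apply']; exact hφmaps ih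
  have hsum : totalAction φ f₁ x d - totalAction φ f₂ x d = 0 := by
    rw [totalAction, totalAction, ← Finset.sum_sub_distrib]
    have hcongr : ∀ i ∈ Finset.range d, f₁ (φ^[i] x) - f₂ (φ^[i] x)
        = g (φ^[i+1] x) - g (φ^[i] x) := by
      intro i _
      rw [hhp _ (horb i), Function.iterate_succ_apply']
    rw [Finset.sum_congr rfl hcongr, Finset.sum_range_sub (fun i => g (φ^[i] x))]
    rw [hx.2.2.1]
    simp
  linarith [hsum]
end
end

section
/- Given positive real numbers a, b, there exists a constant c ≥ 0 such that N_k(a,b)² ≥ 2abk − c·k^{1/2} for every nonnegative integer k. -/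
open Real Set Filter

noncomputable section

/-- `N_k(a,b)`: the `(k+1)`-st smallest element, counted with repetitions, of the sequence
of nonnegative integer linear combinations `am + bn` (`m, n ∈ ℕ`) written in nondecreasing
order; equivalently, `N_k(a,b) = inf {L ∈ ℝ | #{(m,n) ∈ ℕ×ℕ : am+bn ≤ L} ≥ k+1}`. -/
def Nk (a b : ℝ) (k : ℕ) : ℝ :=
  sInf {L : ℝ | k + 1 ≤ {p : ℕ × ℕ | a * p.1 + b * p.2 ≤ L}.ncard}

lemma Nk_set_eq (a b L : ℝ) (ha : 0 < a) (hb : 0 < b) :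
    {p : ℕ × ℕ | a * p.1 + b * p.2 ≤ L} =
      ↑((Finset.range (⌊L/a⌋₊ + 2) ×ˢ Finset.range (⌊L/b⌋₊ + 2)).filter
        (fun p => a * p.1 + b * p.2 ≤ L)) := by
  ext p
  simp only [Set.mem_setOf_eq, Finset.coe_filter, Finset.mem_product, Finset.mem_range,
    Set.mem_setOf_eq]
  constructor
  · intro h
    refine ⟨⟨?_, ?_⟩, h⟩
    · have h1 : (p.1 : ℝ) ≤ L / a := by
        rw [le_div_iff₀ ha]
        nlinarith [mul_nonneg hb.le (Nat.cast_nonneg (α := ℝ) p.2)]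
      have := Nat.le_floor h1
      omega
    · have h1 : (p.2 : ℝ) ≤ L / b := by
        rw [le_div_iff₀ hb]
        nlinarith [mul_nonneg ha.le (Nat.cast_nonneg (α := ℝ) p.1)]
      have := Nat.le_floor h1
      omega
  · exact fun h => h.2

lemma Nk_set_finite (a b L : ℝ) (ha : 0 < a) (hb : 0 < b) :
    {p : ℕ × ℕ | a * p.1 + b * p.2 ≤ L}.Finite := by
  rw [Nk_set_eq a b L ha hb]; exact Finset.finite_toSet _

lemma key (a b L : ℝ) (ha : 0 < a) (hb : 0 < b) :
    2 * {p : ℕ × ℕ | a * p.1 + b * p.2 ≤ L}.ncard ≤ (⌊L/a⌋₊ + 2) * (⌊L/b⌋₊ + 2) := by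
  set M := ⌊L/a⌋₊ + 1 with hM
  set N := ⌊L/b⌋₊ + 1 with hN
  set G := Finset.range (M+1) ×ˢ Finset.range (N+1) with hG
  set T := G.filter (fun p => a * p.1 + b * p.2 ≤ L) with hT
  have hset : {p : ℕ × ℕ | a * p.1 + b * p.2 ≤ L} = ↑T := Nk_set_eq a b L ha hb
  rw [hset, Set.ncard_coe_finset]
  have hmemT : ∀ p ∈ T, p.1 ≤ M ∧ p.2 ≤ N ∧ a * p.1 + b * p.2 ≤ L := by
    intro p hp
    simp only [hT, Finset.mem_filter, hG, Finset.mem_product, Finset.mem_range] at hp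
    exact ⟨by omega, by omega, hp.2⟩
  set T' := T.image (fun p => (M - p.1, N - p.2)) with hT'
  have hcard' : T'.card = T.card := by
    apply Finset.card_image_of_injOn
    intro p hp q hq hpq
    obtain ⟨hp1, hp2, -⟩ := hmemT p hp
    obtain ⟨hq1, hq2, -⟩ := hmemT q hq
    have h1 := congrArg Prod.fst hpq
    have h2 := congrArg Prod.snd hpq
    simp only at h1 h2
    have : p.1 = q.1 := by omega
    have : p.2 = q.2 := by omega
    exact Prod.ext ‹p.1 = q.1› ‹p.2 = q.2›
  have hsub : T' ⊆ G := by
    intro q hq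
    simp only [hT', Finset.mem_image] at hq
    obtain ⟨p, hp, rfl⟩ := hq
    simp only [hG, Finset.mem_product, Finset.mem_range]
    omega
  have hTG : T ⊆ G := Finset.filter_subset _ _
  have hLa : L < a * M := by
    have := Nat.lt_floor_add_one (L / a)
    have h2 : L / a < (M : ℝ) := by push_cast [hM]; linarith
    have := (div_lt_iff₀ ha).mp h2
    linarith
  have hLb : L < b * N := by
    have := Nat.lt_floor_add_one (L / b)
    have h2 : L / b < (N : ℝ) := by push_cast [hN]; linarith
    have := (div_lt_iff₀ hb).mp h2
    linarith
  have hdisj : Disjoint T T' := by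
    rw [Finset.disjoint_left]
    intro q hqT hqT'
    simp only [hT', Finset.mem_image] at hqT'
    obtain ⟨p, hp, hpq⟩ := hqT'
    obtain ⟨hp1, hp2, hple⟩ := hmemT p hp
    obtain ⟨-, -, hqle⟩ := hmemT q hqT
    have hq1 : q.1 = M - p.1 := by rw [← hpq]
    have hq2 : q.2 = N - p.2 := by rw [← hpq]
    have hc1 : (q.1 : ℝ) = (M : ℝ) - (p.1 : ℝ) := by
      rw [hq1]; push_cast [Nat.cast_sub hp1]; ring
    have hc2 : (q.2 : ℝ) = (N : ℝ) - (p.2 : ℝ) := by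
      rw [hq2]; push_cast [Nat.cast_sub hp2]; ring
    rw [hc1, hc2] at hqle
    nlinarith
  have hunion : T.card + T'.card ≤ G.card := by
    rw [← Finset.card_union_of_disjoint hdisj]
    exact Finset.card_le_card (Finset.union_subset hTG hsub)
  have hGcard : G.card = (M+1) * (N+1) := by
    simp [hG, Finset.card_product]
  have heq : (M+1) * (N+1) = (⌊L/a⌋₊ + 2) * (⌊L/b⌋₊ + 2) := by rw [hM, hN]
  omega

lemma elem_nonneg (a b : ℝ) (ha : 0 < a) (hb : 0 < b) (k : ℕ) (L : ℝ)
    (hL : k + 1 ≤ {p : ℕ × ℕ | a * p.1 + b * p.2 ≤ L}.ncard) : 0 ≤ L := by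
  by_contra h
  push_neg at h
  have hemp : {p : ℕ × ℕ | a * p.1 + b * p.2 ≤ L} = ∅ := by
    ext p
    simp only [Set.mem_setOf_eq, Set.mem_empty_iff_false, iff_false, not_le]
    have h1 : (0:ℝ) ≤ a * p.1 := mul_nonneg ha.le (Nat.cast_nonneg _)
    have h2 : (0:ℝ) ≤ b * p.2 := mul_nonneg hb.le (Nat.cast_nonneg _)
    linarith
  rw [hemp] at hL
  simp at hL

lemma elem_lb (a b : ℝ) (ha : 0 < a) (hb : 0 < b) (k : ℕ) (L : ℝ)
    (hL : k + 1 ≤ {p : ℕ × ℕ | a * p.1 + b * p.2 ≤ L}.ncard) :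
    Real.sqrt (2*a*b*k) ≤ L + (a + b + 2*Real.sqrt (a*b)) := by
  have hL0 : 0 ≤ L := elem_nonneg a b ha hb k L hL
  have h2 := key a b L ha hb
  have h3 : 2 * (k + 1) ≤ (⌊L/a⌋₊ + 2) * (⌊L/b⌋₊ + 2) := by omega
  have h3r : (2:ℝ) * ((k:ℝ) + 1) ≤ ((⌊L/a⌋₊ : ℝ) + 2) * ((⌊L/b⌋₊ : ℝ) + 2) := by
    exact_mod_cast h3
  have hfa : (⌊L/a⌋₊ : ℝ) ≤ L/a := Nat.floor_le (by positivity)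
  have hfb : (⌊L/b⌋₊ : ℝ) ≤ L/b := Nat.floor_le (by positivity)
  have h4 : (2:ℝ) * ((k:ℝ) + 1) ≤ (L/a + 2) * (L/b + 2) := by
    refine le_trans h3r ?_
    have ha2 : (0:ℝ) ≤ (⌊L/a⌋₊ : ℝ) + 2 := by positivity
    have hb2 : (0:ℝ) ≤ (⌊L/b⌋₊ : ℝ) + 2 := by positivity
    nlinarith
  set s := Real.sqrt (a*b) with hs
  have hs0 : 0 ≤ s := Real.sqrt_nonneg _
  have hs2 : s^2 = a*b := Real.sq_sqrt (by positivity)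
  have h5 : 2*a*b*(k:ℝ) ≤ (L + (a + b + 2*s))^2 := by
    have hmul : (2:ℝ) * ((k:ℝ) + 1) * (a*b) ≤ (L/a + 2) * (L/b + 2) * (a*b) := by
      apply mul_le_mul_of_nonneg_right h4 (by positivity)
    have hexp : (L/a + 2) * (L/b + 2) * (a*b) = (L + 2*a) * (L + 2*b) := by
      field_simp
    rw [hexp] at hmul
    nlinarith [mul_nonneg hs0 hL0, sq_nonneg (a+b), mul_nonneg (mul_nonneg hs0 ha.le) hb.le,
      mul_nonneg hs0 (add_pos ha hb).le]
  have h6 := Real.sqrt_le_sqrt h5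
  rwa [Real.sqrt_sq (by positivity)] at h6

lemma set_nonempty (a b : ℝ) (ha : 0 < a) (hb : 0 < b) (k : ℕ) :
    {L : ℝ | k + 1 ≤ {p : ℕ × ℕ | a * p.1 + b * p.2 ≤ L}.ncard}.Nonempty := by
  refine ⟨a * k, ?_⟩
  simp only [Set.mem_setOf_eq]
  have hinj : Function.Injective (fun m : ℕ => (m, (0:ℕ))) := by
    intro m n h
    exact congrArg Prod.fst h
  set F := (Finset.range (k+1)).image (fun m : ℕ => (m, (0:ℕ))) with hF
  have hcard : F.card = k + 1 := by
    rw [hF, Finset.card_image_of_injective _ hinj, Finset.card_range]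
  have hsub : ↑F ⊆ {p : ℕ × ℕ | a * p.1 + b * p.2 ≤ a * k} := by
    intro p hp
    simp only [hF, Finset.coe_image, Finset.coe_range, Set.mem_image, Set.mem_Iio] at hp
    obtain ⟨m, hm, rfl⟩ := hp
    simp only [Set.mem_setOf_eq, Nat.cast_zero]
    have hmk : m ≤ k := by omega
    have h1 : (m:ℝ) ≤ (k:ℝ) := by exact_mod_cast hmk
    have h2 := mul_le_mul_of_nonneg_left h1 ha.le
    linarith
  calc k + 1 = (↑F : Set (ℕ × ℕ)).ncard := by rw [Set.ncard_coe_finset, hcard]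
    _ ≤ _ := Set.ncard_le_ncard hsub (Nk_set_finite a b (a*k) ha hb)

/-- Combinatorial lemma: given `a, b > 0` there is a constant `c ≥ 0` such that
`N_k(a,b)² ≥ 2abk − c·√k` for every nonnegative integer `k`. -/
theorem Nk_sq_ge (a b : ℝ) (ha : 0 < a) (hb : 0 < b) :
    ∃ c : ℝ, 0 ≤ c ∧ ∀ k : ℕ, 2 * a * b * k - c * Real.sqrt k ≤ (Nk a b k) ^ 2 := by
  set C := a + b + 2*Real.sqrt (a*b) with hC
  have hC0 : 0 < C := by positivity
  refine ⟨2*C*Real.sqrt (2*a*b), by positivity, fun k => ?_⟩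
  set s := Real.sqrt (2*a*b*k) with hs
  have hs0 : 0 ≤ s := Real.sqrt_nonneg _
  have hs2 : s^2 = 2*a*b*k := Real.sq_sqrt (by positivity)
  have hck : 2*C*Real.sqrt (2*a*b) * Real.sqrt k = 2*C*s := by
    rw [hs, mul_assoc, ← Real.sqrt_mul (by positivity)]
  have hgoal : 2 * a * b * (k:ℝ) - 2*C*Real.sqrt (2*a*b) * Real.sqrt k = s^2 - 2*C*s := by
    rw [hck, hs2]
  rw [hgoal]
  have hlb : s - C ≤ Nk a b k := by
    unfold Nk
    refine le_csInf (set_nonempty a b ha hb k) ?_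
    intro L hL
    have := elem_lb a b ha hb k L hL
    rw [← hs, ← hC] at this
    linarith
  rcases le_or_gt s (2*C) with h | h
  · nlinarith [sq_nonneg (Nk a b k)]
  · have hnn : (0:ℝ) ≤ s - C := by linarith
    have hsq : (s - C)^2 ≤ (Nk a b k)^2 := pow_le_pow_left₀ hnn hlb 2
    nlinarith
end
end

section
/- Let a, b > 0 be real numbers and m, n ∈ ℕ, and set L = am + bn. Then the number of lattice points in the closed triangle bounded by the coordinate axes and the line ax + by = L equals (m+1)(n+1) + Σ_{i=1}^{m} ⌊ia/b⌋ + Σ_{j=1}^{n} ⌊jb/a⌋; that is, #{(i,j) ∈ ℕ×ℕ : ai + bj ≤ am + bn} = (m+1)(n+1) + Σ_{i=1}^{m} ⌊ia/b⌋ + Σ_{j=1}^{n} ⌊jb/a⌋. -/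
open Set

/- The point (m, n) lies on the hypotenuse and cuts the triangle into the rectangle
`[0, m] × [0, n]`, the part above it and the part to its right (no lattice point is both above and
to the right). Above the rectangle, the column `x = m - k` holds the `⌊k a / b⌋` points with
`n < y ≤ n + k a / b`; the part to the right is the same picture with the axes swapped. -/

theorem Nat.le_floor_mul_div_iff {a b : ℝ} (ha : 0 ≤ a) (hb : 0 < b) (k l : ℕ) :
    l ≤ ⌊k * a / b⌋₊ ↔ b * l ≤ a * k := by
  rw [Nat.le_floor_iff (by positivity), le_div_iff₀ hb, mul_comm a, mul_comm b]

theorem lt_of_mul_add_mul_le_of_lt {a b : ℝ} (ha : 0 ≤ a) (hb : 0 < b) {i j m n : ℕ}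
    (h : a * i + b * j ≤ a * m + b * n) (hj : n < j) : i < m := by
  by_contra! hi
  have hi' : (m : ℝ) ≤ i := by exact_mod_cast hi
  have hj' : (n : ℝ) < j := by exact_mod_cast hj
  nlinarith

def upperPart (a b : ℝ) (m n : ℕ) : Set (ℕ × ℕ) :=
  {p | n < p.2 ∧ a * p.1 + b * p.2 ≤ a * m + b * n}

theorem upperPart_eq_biUnion {a b : ℝ} (ha : 0 ≤ a) (hb : 0 < b) (m n : ℕ) :
    upperPart a b m n =
      ↑((Finset.Icc 1 m).biUnion fun k => {m - k} ×ˢ Finset.Ioc n (n + ⌊k * a / b⌋₊)) := by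
  ext ⟨i, j⟩
  simp only [upperPart, mem_ofPred_eq, Finset.coe_biUnion, Finset.mem_coe, Finset.mem_Icc,
    mem_iUnion, Finset.mem_product, Finset.mem_singleton, Finset.mem_Ioc, exists_prop]
  constructor
  · rintro ⟨hj, h⟩
    have hi := lt_of_mul_add_mul_le_of_lt ha hb h hj
    refine ⟨m - i, by omega, by omega, hj, ?_⟩
    have hfloor : j - n ≤ ⌊((m - i : ℕ) : ℝ) * a / b⌋₊ := by
      rw [Nat.le_floor_mul_div_iff ha hb, Nat.cast_sub hi.le, Nat.cast_sub hj.le]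
      linarith
    omega
  · rintro ⟨k, ⟨-, hkm⟩, rfl, hj, hjk⟩
    refine ⟨hj, ?_⟩
    have hfloor := (Nat.le_floor_mul_div_iff ha hb k (j - n)).1 (by omega)
    rw [Nat.cast_sub hkm]
    rw [Nat.cast_sub hj.le] at hfloor
    linarith

theorem finite_upperPart {a b : ℝ} (ha : 0 ≤ a) (hb : 0 < b) (m n : ℕ) :
    (upperPart a b m n).Finite := by
  rw [upperPart_eq_biUnion ha hb]
  exact Finset.finite_toSet _

theorem ncard_upperPart {a b : ℝ} (ha : 0 ≤ a) (hb : 0 < b) (m n : ℕ) :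
    ((upperPart a b m n).ncard : ℤ) = ∑ k ∈ Finset.Icc 1 m, ⌊(k : ℝ) * a / b⌋ := by
  rw [upperPart_eq_biUnion ha hb, ncard_coe_finset, Finset.card_biUnion]
  · push_cast
    refine Finset.sum_congr rfl fun k _ => ?_
    rw [Finset.card_product, Finset.card_singleton, Nat.card_Ioc, one_mul,
      Nat.add_sub_cancel_left, Int.natCast_floor_eq_floor (by positivity)]
  · intro k hk k' hk' hne
    simp only [Finset.coe_Icc, mem_Icc] at hk hk'
    exact Finset.disjoint_product.2 (Or.inl (Finset.disjoint_singleton.2 (by omega)))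

theorem triangle_eq_union {a b : ℝ} (ha : 0 ≤ a) (hb : 0 ≤ b) (m n : ℕ) :
    {p : ℕ × ℕ | a * p.1 + b * p.2 ≤ a * m + b * n} =
      (Iic m ×ˢ Iic n ∪ upperPart a b m n) ∪ Prod.swap ⁻¹' upperPart b a n m := by
  ext ⟨i, j⟩
  simp only [upperPart, mem_ofPred_eq, mem_union, mem_prod, mem_Iic, mem_preimage, Prod.fst_swap,
    Prod.snd_swap]
  constructor
  · intro h
    by_cases hj : n < j
    · exact Or.inl (Or.inr ⟨hj, h⟩)
    by_cases hi : m < i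
    · exact Or.inr ⟨hi, by linarith⟩
    exact Or.inl (Or.inl ⟨by omega, by omega⟩)
  · rintro ((⟨hi, hj⟩ | ⟨-, h⟩) | ⟨-, h⟩)
    · gcongr
    · exact h
    · linarith

theorem disjoint_upperPart_preimage_swap {a b : ℝ} (ha : 0 ≤ a) (hb : 0 < b) (m n : ℕ) :
    Disjoint (upperPart a b m n) (Prod.swap ⁻¹' upperPart b a n m) := by
  refine disjoint_left.2 fun p ⟨hn, h⟩ ⟨hm, _⟩ => ?_
  exact (lt_of_mul_add_mul_le_of_lt ha hb h hn).not_gt hm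

/-- Counting lattice points in the triangle bounded by the coordinate axes and the line
`ax + by = am + bn`: there are exactly
`(m+1)(n+1) + Σ_{i=1}^{m} ⌊ia/b⌋ + Σ_{j=1}^{n} ⌊jb/a⌋` of them. -/
theorem triangle_lattice_point_count (a b : ℝ) (ha : 0 < a) (hb : 0 < b) (m n : ℕ) :
    ({p : ℕ × ℕ | a * p.1 + b * p.2 ≤ a * m + b * n}.ncard : ℤ) =
      (m + 1) * (n + 1) + ∑ i ∈ Finset.Icc 1 m, ⌊(i : ℝ) * a / b⌋
        + ∑ j ∈ Finset.Icc 1 n, ⌊(j : ℝ) * b / a⌋ := by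
  have hrect : (Iic m ×ˢ Iic n).Finite := (finite_Iic m).prod (finite_Iic n)
  have hswap : (Prod.swap ⁻¹' upperPart b a n m).ncard = (upperPart b a n m).ncard :=
    ncard_preimage_of_injective_subset_range Prod.swap_injective
      (Prod.swap_surjective.range_eq ▸ subset_univ _)
  have hdisjU : Disjoint (Iic m ×ˢ Iic n) (upperPart a b m n) :=
    disjoint_left.2 fun p hp hpU => hpU.1.not_ge (mem_prod.1 hp).2
  have hdisjV : Disjoint (Iic m ×ˢ Iic n ∪ upperPart a b m n) (Prod.swap ⁻¹' upperPart b a n m) :=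
    disjoint_union_left.2 ⟨disjoint_left.2 fun p hp hpV => hpV.1.not_ge (mem_prod.1 hp).1,
      disjoint_upperPart_preimage_swap ha.le hb m n⟩
  rw [triangle_eq_union ha.le hb.le, ncard_union_eq hdisjV (hrect.union (finite_upperPart ha.le hb m n))
    ((finite_upperPart hb.le ha n m).preimage Prod.swap_injective.injOn),
    ncard_union_eq hdisjU hrect (finite_upperPart ha.le hb m n), ncard_prod, hswap,
    ncard_Iic_nat, ncard_Iic_nat]
  push_cast
  rw [ncard_upperPart ha.le hb, ncard_upperPart hb.le ha]
end

section
/- Let a, b > 0 with a/b irrational, and let m, n, k ∈ ℕ. Then am + bn = N_k(a,b) if and only if (m+1)(n+1) − 1 + Σ_{i=1}^{m} ⌊ia/b⌋ + Σ_{j=1}^{n} ⌊jb/a⌋ = k. -/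
open Real Set Filter

noncomputable section

/-!
The `k`-th smallest value of a map `v` with finite sublevel sets is `v x` exactly when at most
`k` points lie strictly below `v x` and more than `k` lie weakly below it; when `v` is injective
this says that exactly `k` points lie strictly below `v x`. For `v (p, q) = a p + b q`
irrationality of `a / b` gives injectivity, and the points below `a m + b n` are those of the box
`[0, m] × [0, n]` other than `(m, n)`, the points `(m - i, n + j)` with `b j < a i`, i.e.
`1 ≤ j ≤ ⌊i a / b⌋`, and their mirror images `(m + i, n - j)` with `a i < b j`.
-/

open Function

section OrderStatistic

variable {ι : Type*} (v : ι → ℝ)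

/-- Indexed from `k = 0`: the `(k+1)`-st smallest value of `v`, counted with multiplicity. -/
def orderStatistic (k : ℕ) : ℝ :=
  sInf {L : ℝ | k + 1 ≤ {i | v i ≤ L}.ncard}

variable {v} [Northcott v]

lemma Northcott.finite_lt (c : ℝ) : {i | v i < c}.Finite :=
  (Northcott.finite_le c).subset fun _ hi => le_of_lt hi

lemma nonempty_setOf_succ_le_ncard [Infinite ι] (k : ℕ) :
    {L : ℝ | k + 1 ≤ {i | v i ≤ L}.ncard}.Nonempty := by
  obtain ⟨s, hs⟩ := Infinite.exists_subset_card_eq ι (k + 1)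
  have hne : s.Nonempty := by rw [← Finset.card_pos, hs]; omega
  refine ⟨s.sup' hne v, ?_⟩
  calc k + 1 = (s : Set ι).ncard := by rw [Set.ncard_coe_finset, hs]
    _ ≤ _ := Set.ncard_le_ncard (fun i hi => Finset.le_sup' v hi) (Northcott.finite_le _)

lemma bddBelow_setOf_succ_le_ncard [Nonempty ι] (k : ℕ) :
    BddBelow {L : ℝ | k + 1 ≤ {i | v i ≤ L}.ncard} := by
  obtain ⟨i₀, -, hi₀⟩ := Northcott.exists_min_image v univ univ_nonempty
  refine ⟨v i₀, fun L (hL : k + 1 ≤ _) => ?_⟩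
  obtain ⟨i, hi⟩ := nonempty_of_ncard_ne_zero (by omega : {i | v i ≤ L}.ncard ≠ 0)
  exact (hi₀ i trivial).trans hi

lemma ncard_setOf_lt_orderStatistic_le (k : ℕ) : {i | v i < orderStatistic v k}.ncard ≤ k := by
  by_contra! hk
  obtain ⟨y, hy, hymax⟩ := exists_max_image {i | v i < orderStatistic v k} v
    (Northcott.finite_lt _) (nonempty_of_ncard_ne_zero (by omega))
  have : Nonempty ι := ⟨y⟩
  have hyT : k + 1 ≤ {i | v i ≤ v y}.ncard :=
    hk.trans_le (ncard_le_ncard hymax (Northcott.finite_le _))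
  exact (csInf_le (bddBelow_setOf_succ_le_ncard k) hyT).not_gt hy

lemma lt_ncard_setOf_le_orderStatistic [Infinite ι] (k : ℕ) :
    k < {i | v i ≤ orderStatistic v k}.ncard := by
  by_contra! hk
  have hgap : ∀ L ∈ {L : ℝ | k + 1 ≤ {i | v i ≤ L}.ncard},
      ∃ i, orderStatistic v k < v i ∧ v i ≤ L := by
    intro L (hL : k + 1 ≤ _)
    by_contra! h
    have : {i | v i ≤ L}.ncard ≤ {i | v i ≤ orderStatistic v k}.ncard :=
      ncard_le_ncard (fun i (hi : v i ≤ L) => not_lt.1 fun hs => (h i hs).not_ge hi)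
        (Northcott.finite_le _)
    omega
  obtain ⟨L, hL⟩ := nonempty_setOf_succ_le_ncard (v := v) k
  obtain ⟨i, hi, -⟩ := hgap L hL
  obtain ⟨y, hy, hymin⟩ := Northcott.exists_min_image v {i | orderStatistic v k < v i} ⟨i, hi⟩
  have : v y ≤ orderStatistic v k := le_csInf (nonempty_setOf_succ_le_ncard k) fun L hL =>
    let ⟨i, hi, hiL⟩ := hgap L hL
    (hymin i hi).trans hiL
  exact this.not_gt hy

lemma orderStatistic_eq_of_ncard {k : ℕ} {c : ℝ} (hlt : {i | v i < c}.ncard ≤ k)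
    (hle : k < {i | v i ≤ c}.ncard) : orderStatistic v k = c := by
  refine IsLeast.csInf_eq ⟨hle, fun L (hL : k + 1 ≤ _) => not_lt.1 fun hLc => ?_⟩
  have : {i | v i ≤ L}.ncard ≤ {i | v i < c}.ncard :=
    ncard_le_ncard (fun i (hi : v i ≤ L) => hi.trans_lt hLc) (Northcott.finite_lt c)
  omega

theorem orderStatistic_eq_iff [Infinite ι] (k : ℕ) (x : ι) :
    orderStatistic v k = v x ↔ {i | v i < v x}.ncard ≤ k ∧ k < {i | v i ≤ v x}.ncard :=
  ⟨fun h => h ▸ ⟨ncard_setOf_lt_orderStatistic_le k, lt_ncard_setOf_le_orderStatistic k⟩,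
    fun h => orderStatistic_eq_of_ncard h.1 h.2⟩

lemma ncard_setOf_le_eq_ncard_setOf_lt_add_one (hv : Injective v) (x : ι) :
    {i | v i ≤ v x}.ncard = {i | v i < v x}.ncard + 1 := by
  have : {i | v i ≤ v x} = insert x {i | v i < v x} := by
    ext i
    simp [le_iff_lt_or_eq, hv.eq_iff, or_comm]
  rw [this, ncard_insert_of_notMem (s := {i | v i < v x}) (lt_irrefl (v x))
    (Northcott.finite_lt (v x))]

theorem orderStatistic_eq_iff_of_injective [Infinite ι] (hv : Injective v) (k : ℕ) (x : ι) :
    orderStatistic v k = v x ↔ {i | v i < v x}.ncard = k := by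
  rw [orderStatistic_eq_iff, ncard_setOf_le_eq_ncard_setOf_lt_add_one hv]
  omega

end OrderStatistic

lemma ncard_setOf_fst_mem_snd_mem {α β : Type*} (s : Finset α) (t : α → Finset β) :
    {p : α × β | p.1 ∈ s ∧ p.2 ∈ t p.1}.ncard = ∑ i ∈ s, (t i).card := by
  have : {p : α × β | p.1 ∈ s ∧ p.2 ∈ t p.1} = Equiv.sigmaEquivProd α β '' ↑(s.sigma t) := by
    ext ⟨i, j⟩
    simp [Equiv.sigmaEquivProd]
  rw [this, ncard_image_of_injective _ (Equiv.injective _), ncard_coe_finset, Finset.card_sigma]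

lemma ncard_Iio_prod (m n : ℕ) : (Iio (m, n)).ncard = (m + 1) * (n + 1) - 1 := by
  rw [← Finset.coe_Iio, ncard_coe_finset, Finset.card_Iio_eq_card_Iic_sub_one,
    Finset.card_Iic_prod, Nat.card_Iic, Nat.card_Iic]

section LatticePoints

variable {a b : ℝ}

lemma northcott_lincomb (ha : 0 < a) (hb : 0 < b) :
    Northcott (fun p : ℕ × ℕ => a * p.1 + b * p.2) := by
  refine ⟨fun L => (finite_Iic (⌊L / a⌋₊, ⌊L / b⌋₊)).subset fun p (hp : _ ≤ L) => ?_⟩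
  have h₁ : a * p.1 ≤ L := by nlinarith [mul_nonneg hb.le (Nat.cast_nonneg (α := ℝ) p.2)]
  have h₂ : b * p.2 ≤ L := by nlinarith [mul_nonneg ha.le (Nat.cast_nonneg (α := ℝ) p.1)]
  exact ⟨Nat.le_floor ((le_div_iff₀' ha).2 h₁), Nat.le_floor ((le_div_iff₀' hb).2 h₂)⟩

lemma strictMono_lincomb (ha : 0 < a) (hb : 0 < b) :
    StrictMono (fun p : ℕ × ℕ => a * p.1 + b * p.2) := by
  rintro ⟨p, q⟩ ⟨p', q'⟩ h
  rcases Prod.lt_iff.1 h with ⟨hp, hq⟩ | ⟨hp, hq⟩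
  exacts [add_lt_add_of_lt_of_le (by gcongr) (by gcongr),
    add_lt_add_of_le_of_lt (by gcongr) (by gcongr)]

lemma injective_lincomb (hb : 0 < b) (hirr : Irrational (a / b)) :
    Injective (fun p : ℕ × ℕ => a * p.1 + b * p.2) := by
  rintro ⟨p, q⟩ ⟨p', q'⟩ h
  dsimp only at h
  obtain rfl : p = p' := by
    by_contra hp
    have hp' : (p : ℝ) - p' ≠ 0 := sub_ne_zero.2 (Nat.cast_injective.ne hp)
    refine hirr ⟨((q' : ℚ) - q) / ((p : ℚ) - p'), ?_⟩
    push_cast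
    rw [div_eq_div_iff hp' hb.ne']
    linarith
  have : (q : ℝ) = q' := mul_left_cancel₀ hb.ne' (by linarith)
  rw [Nat.cast_injective this]

lemma Irrational.natCast_mul_div (hirr : Irrational (a / b)) {i : ℕ} (hi : i ≠ 0) :
    Irrational (i * a / b) := by
  rw [mul_div_assoc]
  exact hirr.natCast_mul hi

lemma mul_lt_mul_iff_le_floor (ha : 0 ≤ a) (hb : 0 < b) (hirr : Irrational (a / b)) {i : ℕ}
    (hi : i ≠ 0) (j : ℕ) : b * j < a * i ↔ j ≤ ⌊i * a / b⌋₊ := by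
  rw [Nat.le_floor_iff (by positivity), ((hirr.natCast_mul_div hi).ne_nat j).symm.le_iff_lt,
    lt_div_iff₀ hb, mul_comm (j : ℝ), mul_comm (i : ℝ)]

lemma ncard_upperLeft (ha : 0 ≤ a) (hb : 0 < b) (hirr : Irrational (a / b)) (m n : ℕ) :
    {p : ℕ × ℕ | p.1 < m ∧ n < p.2 ∧ a * p.1 + b * p.2 < a * m + b * n}.ncard
      = ∑ i ∈ Finset.Icc 1 m, ⌊i * a / b⌋₊ := by
  have hset : {p : ℕ × ℕ | p.1 < m ∧ n < p.2 ∧ a * p.1 + b * p.2 < a * m + b * n}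
      = {p | p.1 ∈ Finset.range m ∧ p.2 ∈ Finset.Ioc n (n + ⌊(m - p.1 : ℕ) * a / b⌋₊)} := by
    ext ⟨p, q⟩
    simp only [mem_ofPred_eq, Finset.mem_range, Finset.mem_Ioc]
    refine and_congr_right fun hp => and_congr_right fun hq => ?_
    rw [← Nat.sub_le_iff_le_add', ← mul_lt_mul_iff_le_floor ha hb hirr (by omega),
      Nat.cast_sub hq.le, Nat.cast_sub hp.le]
    constructor <;> intro h <;> linarith
  rw [hset, ncard_setOf_fst_mem_snd_mem _ fun p => Finset.Ioc n (n + ⌊(m - p : ℕ) * a / b⌋₊)]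
  simp only [Nat.card_Ioc, Nat.add_sub_cancel_left]
  exact Finset.sum_nbij' (m - ·) (m - ·) (by simp; omega) (by simp; omega) (by simp; omega)
    (by simp; omega) fun _ _ => rfl

lemma ncard_lowerRight (ha : 0 < a) (hb : 0 ≤ b) (hirr : Irrational (a / b)) (m n : ℕ) :
    {p : ℕ × ℕ | m < p.1 ∧ p.2 < n ∧ a * p.1 + b * p.2 < a * m + b * n}.ncard
      = ∑ j ∈ Finset.Icc 1 n, ⌊j * b / a⌋₊ := by
  have hset : {p : ℕ × ℕ | m < p.1 ∧ p.2 < n ∧ a * p.1 + b * p.2 < a * m + b * n}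
      = Prod.swap ⁻¹' {p | p.1 < n ∧ m < p.2 ∧ b * p.1 + a * p.2 < b * n + a * m} := by
    ext p
    simp only [mem_ofPred_eq, mem_preimage, Prod.fst_swap, Prod.snd_swap, add_comm (b * _)]
    tauto
  rw [hset, ncard_preimage_of_injective_subset_range Prod.swap_injective
    (by simp [Prod.swap_surjective.range_eq]), ncard_upperLeft hb ha (by simpa using hirr.inv)]

lemma setOf_lincomb_lt_eq (ha : 0 < a) (hb : 0 < b) (m n : ℕ) :
    {p : ℕ × ℕ | a * p.1 + b * p.2 < a * m + b * n}
      = Iio (m, n) ∪ {p | p.1 < m ∧ n < p.2 ∧ a * p.1 + b * p.2 < a * m + b * n}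
          ∪ {p | m < p.1 ∧ p.2 < n ∧ a * p.1 + b * p.2 < a * m + b * n} := by
  have hv := strictMono_lincomb ha hb
  ext p
  simp only [mem_union, mem_ofPred_eq, mem_Iio]
  constructor
  · intro h
    by_cases hle : p ≤ (m, n)
    · exact Or.inl (Or.inl (hle.lt_of_ne (by rintro rfl; exact lt_irrefl _ h)))
    have hge : ¬ (m, n) ≤ p := fun hge => h.not_ge (hv.monotone hge)
    rw [Prod.le_def] at hle hge
    rcases (by omega : (p.1 < m ∧ n < p.2) ∨ (m < p.1 ∧ p.2 < n)) with ⟨h₁, h₂⟩ | ⟨h₁, h₂⟩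
    exacts [Or.inl (Or.inr ⟨h₁, h₂, h⟩), Or.inr ⟨h₁, h₂, h⟩]
  · rintro ((h | ⟨-, -, h⟩) | ⟨-, -, h⟩)
    exacts [hv h, h, h]

lemma ncard_lincomb_lt (ha : 0 < a) (hb : 0 < b) (hirr : Irrational (a / b)) (m n : ℕ) :
    {p : ℕ × ℕ | a * p.1 + b * p.2 < a * m + b * n}.ncard
      = (m + 1) * (n + 1) - 1 + ∑ i ∈ Finset.Icc 1 m, ⌊i * a / b⌋₊
          + ∑ j ∈ Finset.Icc 1 n, ⌊j * b / a⌋₊ := by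
  have hfin := (northcott_lincomb ha hb).finite_lt (a * m + b * n)
  rw [setOf_lincomb_lt_eq ha hb] at hfin ⊢
  have hfin' := hfin.subset subset_union_left
  rw [ncard_union_eq _ hfin' (hfin.subset subset_union_right),
    ncard_union_eq _ (hfin'.subset subset_union_left) (hfin'.subset subset_union_right),
    ncard_Iio_prod, ncard_upperLeft ha.le hb hirr, ncard_lowerRight ha hb.le hirr]
  · exact disjoint_left.2 fun p (hp : p < (m, n)) (hp' : _ ∧ n < p.2 ∧ _) =>
      hp'.2.1.not_ge ((Prod.lt_iff.1 hp).elim (·.2) (·.2.le))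
  · refine disjoint_left.2 fun p hp (hp' : m < p.1 ∧ _) => ?_
    rcases hp with (hp : p < (m, n)) | ⟨hp, -⟩
    exacts [hp'.1.not_ge ((Prod.lt_iff.1 hp).elim (·.1.le) (·.1)), hp'.1.not_gt hp]

end LatticePoints

/-- For `a, b > 0` with `a/b` irrational, `am + bn = N_k(a,b)` if and only if
`(m+1)(n+1) − 1 + Σ_{i=1}^{m} ⌊ia/b⌋ + Σ_{j=1}^{n} ⌊jb/a⌋ = k`. -/
theorem Nk_eq_iff_index (a b : ℝ) (ha : 0 < a) (hb : 0 < b)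
    (hirr : Irrational (a / b)) (m n k : ℕ) :
    a * m + b * n = Nk a b k ↔
      ((m + 1) * (n + 1) - 1 + ∑ i ∈ Finset.Icc 1 m, ⌊(i : ℝ) * a / b⌋
        + ∑ j ∈ Finset.Icc 1 n, ⌊(j : ℝ) * b / a⌋ : ℤ) = k := by
  have := northcott_lincomb ha hb
  have key := orderStatistic_eq_iff_of_injective (injective_lincomb hb hirr) k (m, n)
  dsimp only at key
  have hfloor (x y : ℝ) (hx : 0 < x) (hy : 0 < y) (s : Finset ℕ) :
      ((∑ i ∈ s, ⌊i * x / y⌋₊ : ℕ) : ℤ) = ∑ i ∈ s, ⌊i * x / y⌋ := by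
    push_cast
    exact Finset.sum_congr rfl fun i _ => Int.natCast_floor_eq_floor (by positivity)
  rw [eq_comm, show Nk a b k = orderStatistic _ k from rfl, key, ← hfloor a b ha hb,
    ← hfloor b a hb ha, ncard_lincomb_lt ha hb hirr, ← Nat.cast_inj (R := ℤ)]
  push_cast [Nat.one_le_iff_ne_zero.2 (by positivity : (m + 1) * (n + 1) ≠ 0)]
  rfl
end
end

section
/- Let a, b > 0 be real numbers. Then lim_{k→∞} N_k(a,b)²/(2k) = ab. -/
open Real Set Filter

noncomputable section

/-!
Counting the lattice points of the triangle `am + bn ≤ L` column by column gives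
`L² / 2ab ≤ #{am + bn ≤ L} ≤ (L + a + b)² / 2ab`. Hence the `(k+1)`-st point is reached at
a level within `a + b` of `√(2ab(k+1))`, so `N_k ~ √(2ab(k+1))` and `N_k² / 2k → ab`.
-/

open Finset Asymptotics

def latticePointsBelow (a b L : ℝ) : Set (ℕ × ℕ) :=
  {p | a * p.1 + b * p.2 ≤ L}

section LatticeCount

variable {a b L : ℝ}

lemma latticePointsBelow_eq_empty (ha : 0 ≤ a) (hb : 0 ≤ b) (hL : L < 0) :
    latticePointsBelow a b L = ∅ :=
  Set.eq_empty_of_forall_notMem fun p hp => by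
    have : (0 : ℝ) ≤ a * p.1 + b * p.2 := by positivity
    exact (hp.trans_lt hL).not_ge this

lemma mem_latticePointsBelow_iff (ha : 0 < a) (hb : 0 < b) (hL : 0 ≤ L) (m n : ℕ) :
    (m, n) ∈ latticePointsBelow a b L ↔ m ≤ ⌊L / a⌋₊ ∧ n ≤ ⌊(L - a * m) / b⌋₊ := by
  have hbn : (0 : ℝ) ≤ b * n := by positivity
  change a * m + b * n ≤ L ↔ _
  constructor
  · intro h
    have ham : a * m ≤ L := by linarith
    rw [Nat.le_floor_iff (by positivity), Nat.le_floor_iff (div_nonneg (by linarith) hb.le),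
      le_div_iff₀ ha, le_div_iff₀ hb]
    constructor <;> linarith
  · rintro ⟨hm, hn⟩
    rw [Nat.le_floor_iff (by positivity), le_div_iff₀ ha] at hm
    rw [Nat.le_floor_iff (div_nonneg (by linarith) hb.le), le_div_iff₀ hb] at hn
    linarith

lemma latticePointsBelow_eq_biUnion (ha : 0 < a) (hb : 0 < b) (hL : 0 ≤ L) :
    latticePointsBelow a b L =
      ↑((Finset.range (⌊L / a⌋₊ + 1)).biUnion fun m => {m} ×ˢ Finset.range (⌊(L - a * m) / b⌋₊ + 1)) := by
  ext ⟨m, n⟩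
  simp [mem_latticePointsBelow_iff ha hb hL, and_comm]

lemma ncard_latticePointsBelow (ha : 0 < a) (hb : 0 < b) (hL : 0 ≤ L) :
    (latticePointsBelow a b L).ncard =
      ∑ m ∈ Finset.range (⌊L / a⌋₊ + 1), (⌊(L - a * m) / b⌋₊ + 1) := by
  rw [latticePointsBelow_eq_biUnion ha hb hL, Set.ncard_coe_finset, card_biUnion]
  · simp
  · exact fun m _ m' _ h => disjoint_product.2 (Or.inl (disjoint_singleton.2 h))

lemma sum_range_succ_sub_mul (M : ℕ) (L a : ℝ) :
    ∑ m ∈ Finset.range (M + 1), (L - a * m) = (M + 1) * (L - a * M / 2) := by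
  induction M with
  | zero => simp
  | succ M ih => rw [sum_range_succ, ih]; push_cast; ring

lemma mul_floor_div_le (ha : 0 < a) (hL : 0 ≤ L) : a * ⌊L / a⌋₊ ≤ L := by
  rw [mul_comm, ← le_div_iff₀ ha]
  exact Nat.floor_le (by positivity)

lemma lt_mul_floor_div_add_one (ha : 0 < a) : L < a * (⌊L / a⌋₊ + 1) := by
  rw [mul_comm, ← div_lt_iff₀ ha]
  exact Nat.lt_floor_add_one _

lemma sq_div_le_ncard_latticePointsBelow (ha : 0 < a) (hb : 0 < b) (hL : 0 ≤ L) :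
    L ^ 2 / (2 * a * b) ≤ (latticePointsBelow a b L).ncard := by
  set M := ⌊L / a⌋₊
  have hM := mul_floor_div_le ha hL
  have hM' := lt_mul_floor_div_add_one (L := L) ha
  calc L ^ 2 / (2 * a * b) ≤ ∑ m ∈ Finset.range (M + 1), (L - a * m) / b := by
        rw [← sum_div, sum_range_succ_sub_mul, div_le_div_iff₀ (by positivity) hb]
        nlinarith [mul_nonneg (sub_nonneg.2 hM) (sub_nonneg.2 hM'.le), mul_pos ha hb]
    _ ≤ ∑ m ∈ Finset.range (M + 1), ((⌊(L - a * m) / b⌋₊ : ℝ) + 1) :=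
        sum_le_sum fun m _ => (Nat.lt_floor_add_one _).le
    _ = (latticePointsBelow a b L).ncard := by
        rw [ncard_latticePointsBelow ha hb hL]; push_cast; rfl

lemma ncard_latticePointsBelow_le (ha : 0 < a) (hb : 0 < b) (hL : 0 ≤ L) :
    (latticePointsBelow a b L).ncard ≤ (L + a + b) ^ 2 / (2 * a * b) := by
  set M := ⌊L / a⌋₊
  have hM := mul_floor_div_le ha hL
  calc ((latticePointsBelow a b L).ncard : ℝ)
        = ∑ m ∈ Finset.range (M + 1), ((⌊(L - a * m) / b⌋₊ : ℝ) + 1) := by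
        rw [ncard_latticePointsBelow ha hb hL]; push_cast; rfl
    _ ≤ ∑ m ∈ Finset.range (M + 1), ((L - a * m) / b + 1) := by
        refine sum_le_sum fun m hm => ?_
        have : a * m ≤ a * M := by gcongr; exact_mod_cast mem_range_succ_iff.1 hm
        gcongr
        exact Nat.floor_le (div_nonneg (by linarith) hb.le)
    _ = (M + 1) * (L - a * M / 2) / b + (M + 1) := by
        rw [sum_add_distrib, ← sum_div, sum_range_succ_sub_mul]; simp
    _ ≤ (L + a + b) ^ 2 / (2 * a * b) := by
        rw [div_add' _ _ _ hb.ne', div_le_div_iff₀ hb (by positivity)]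
        have key : (a * M + a) * (2 * L - a * M) + 2 * b * (a * M + a) ≤ (L + a + b) ^ 2 := by
          have hx : 0 ≤ a * M := by positivity
          nlinarith [sq_nonneg (L - a * M), mul_nonneg ha.le hx, mul_nonneg hb.le (sub_nonneg.2 hM)]
        nlinarith [mul_le_mul_of_nonneg_left key hb.le]

end LatticeCount

section Nk

variable {a b : ℝ}

lemma le_ncard_latticePointsBelow_sqrt (ha : 0 < a) (hb : 0 < b) (k : ℕ) :
    k + 1 ≤ (latticePointsBelow a b √(2 * a * b * (k + 1))).ncard := by
  have h := sq_div_le_ncard_latticePointsBelow ha hb (sqrt_nonneg (2 * a * b * (k + 1)))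
  rw [sq_sqrt (by positivity), mul_div_cancel_left₀ _ (by positivity)] at h
  exact_mod_cast h

lemma sqrt_sub_le_of_le_ncard (ha : 0 < a) (hb : 0 < b) {k : ℕ} {L : ℝ}
    (hL : k + 1 ≤ (latticePointsBelow a b L).ncard) :
    √(2 * a * b * (k + 1)) - (a + b) ≤ L := by
  rcases lt_or_ge L 0 with hneg | hnonneg
  · simp [latticePointsBelow_eq_empty ha.le hb.le hneg] at hL
  have hk : (k + 1 : ℝ) ≤ (L + a + b) ^ 2 / (2 * a * b) :=
    le_trans (by exact_mod_cast hL) (ncard_latticePointsBelow_le ha hb hnonneg)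
  rw [le_div_iff₀ (by positivity)] at hk
  have : √(2 * a * b * (k + 1)) ≤ L + a + b :=
    sqrt_le_iff.2 ⟨by positivity, by linarith⟩
  linarith

lemma abs_Nk_sub_sqrt_le (ha : 0 < a) (hb : 0 < b) (k : ℕ) :
    |Nk a b k - √(2 * a * b * (k + 1))| ≤ a + b := by
  have hmem := le_ncard_latticePointsBelow_sqrt ha hb k
  have hle : Nk a b k ≤ √(2 * a * b * (k + 1)) :=
    csInf_le ⟨_, fun _ => sqrt_sub_le_of_le_ncard ha hb⟩ hmem
  have hge : √(2 * a * b * (k + 1)) - (a + b) ≤ Nk a b k :=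
    le_csInf ⟨_, hmem⟩ fun _ => sqrt_sub_le_of_le_ncard ha hb
  rw [abs_le]
  constructor <;> linarith

end Nk

lemma isEquivalent_of_abs_sub_le {α : Type*} {l : Filter α} {u v : α → ℝ} {C : ℝ}
    (hv : Tendsto v l atTop) (h : ∀ x, |u x - v x| ≤ C) : u ~[l] v :=
  (IsBigO.of_bound C (Eventually.of_forall fun x => by simpa using h x)).trans_isLittleO
    ((isLittleO_one_left_iff ℝ).2 (tendsto_abs_atTop_atTop.comp hv))

/-- Asymptotics of `N_k(a,b)`: `lim_{k→∞} N_k(a,b)²/(2k) = ab`. -/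
theorem Nk_sq_div_tendsto (a b : ℝ) (ha : 0 < a) (hb : 0 < b) :
    Filter.Tendsto (fun k : ℕ => (Nk a b k) ^ 2 / (2 * k)) Filter.atTop (nhds (a * b)) := by
  set s : ℕ → ℝ := fun k => √(2 * a * b * (k + 1))
  have hs : Tendsto s atTop atTop := tendsto_sqrt_atTop.comp <|
    (tendsto_atTop_add_const_right _ 1 tendsto_natCast_atTop_atTop).const_mul_atTop (by positivity)
  have hequiv : (fun k => Nk a b k ^ 2 / (2 * k)) ~[atTop] fun k => s k ^ 2 / (2 * k) :=
    ((isEquivalent_of_abs_sub_le hs (abs_Nk_sub_sqrt_le ha hb)).pow 2).div IsEquivalent.refl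
  refine hequiv.symm.tendsto_nhds ?_
  have hlim : Tendsto (fun k : ℕ => a * b * ((k : ℝ) / (k + 1))⁻¹) atTop (nhds (a * b)) := by
    simpa using ((tendsto_natCast_div_add_atTop (1 : ℝ)).inv₀ one_ne_zero).const_mul (a * b)
  refine hlim.congr' ((eventually_ne_atTop 0).mono fun k hk => ?_)
  simp only [s, sq_sqrt (by positivity : (0 : ℝ) ≤ 2 * a * b * (k + 1))]
  field_simp
end
end
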